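/- Let c ≥ 0 be a real number and let f : ℕ → ℝ satisfy f(1) ≤ c and, for all n ≥ 2, f(n) ≤ f(⌊3n/4⌋) + c·log₂ n. Then for all n ≥ 1, f(n) ≤ c·(3·(log₂ n)² + 1). (This solves the amortized-insertion recurrence I(n) ≤ I(3n/4) + O(P(n)/n), with P(n) = O(n log n), to I(n) = O(log² n).) -/
import Mathlib

lemma logb_four_thirds : (1/3 : ℝ) ≤ Real.logb 2 (4/3) := by
  have h3 : (3 : ℝ) * Real.logb 2 (4/3) = Real.logb 2 ((4/3)^(3:ℕ)) := by
    rw [Real.logb_pow]; push_cast; ring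
  have h2 : (1 : ℝ) ≤ Real.logb 2 ((4/3)^(3:ℕ)) := by
    have : (2:ℝ) ≤ (4/3)^(3:ℕ) := by norm_num
    calc (1:ℝ) = Real.logb 2 2 := by simp
    _ ≤ _ := Real.logb_le_logb_of_le (by norm_num) (by norm_num) this
  linarith [h3 ▸ h2]

/-- Solving the amortized-insertion recurrence `I(n) ≤ I(3n/4) + O(log n)` to
`I(n) = O(log² n)`: if `f 1 ≤ c` and `f n ≤ f (⌊3n/4⌋) + c·log₂ n` for all `n ≥ 2`,
then `f n ≤ c·(3·(log₂ n)² + 1)` for all `n ≥ 1`. -/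
theorem insertion_recurrence (c : ℝ) (hc : 0 ≤ c) (f : ℕ → ℝ)
    (h1 : f 1 ≤ c)
    (hrec : ∀ n : ℕ, 2 ≤ n → f n ≤ f (3 * n / 4) + c * Real.logb 2 n) :
    ∀ n : ℕ, 1 ≤ n → f n ≤ c * (3 * (Real.logb 2 n) ^ 2 + 1) := by
  intro n
  induction n using Nat.strong_induction_on with
  | _ n ih =>
  intro hn
  rcases eq_or_lt_of_le hn with h | h
  · simp [← h]
    simpa using h1
  · -- n ≥ 2
    have hn2 : 2 ≤ n := h
    set m := 3 * n / 4 with hm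
    have hm1 : 1 ≤ m := by omega
    have hmn : m < n := by omega
    have hmr : (m : ℝ) ≤ 3 * n / 4 := by
      rw [hm]
      calc ((3 * n / 4 : ℕ) : ℝ) ≤ ((3*n : ℕ) : ℝ) / 4 := by
            exact_mod_cast Nat.cast_div_le
      _ = 3 * n / 4 := by push_cast; ring
    have hlogm_nonneg : 0 ≤ Real.logb 2 m := by
      apply Real.logb_nonneg (by norm_num); exact_mod_cast hm1
    have hlogn_nonneg : 0 ≤ Real.logb 2 n := by
      apply Real.logb_nonneg (by norm_num); exact_mod_cast hn
    have hgap : Real.logb 2 m + 1/3 ≤ Real.logb 2 n := by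
      have hmpos : (0:ℝ) < m := by exact_mod_cast hm1
      have h1 : Real.logb 2 m ≤ Real.logb 2 (3 * n / 4) :=
        Real.logb_le_logb_of_le (by norm_num) hmpos hmr
      have h2 : Real.logb 2 (3 * n / 4) = Real.logb 2 n - Real.logb 2 (4/3) := by
        rw [← Real.logb_div (by positivity) (by norm_num)]
        congr 1; ring
      linarith [logb_four_thirds]
    have hlogm_le : Real.logb 2 m ≤ Real.logb 2 n := by linarith
    have hsq : 3 * (Real.logb 2 m)^2 + Real.logb 2 n ≤ 3 * (Real.logb 2 n)^2 := by
      nlinarith [sq_nonneg (Real.logb 2 n - Real.logb 2 m)]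
    have hrecn := hrec n hn2
    have hm_ih := ih m hmn hm1
    nlinarith [mul_le_mul_of_nonneg_left hsq hc]
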